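/- For every n ≥ 2, the sum over all b with 0 ≤ b < 2^n of the integers (2^n * T^[n](b) − 3^(m(b,n)) * b) equals n * 2^(2n−2). -/

import Mathlib

def T (N : ℕ) : ℕ := if N % 2 = 0 then N / 2 else (3 * N + 1) / 2

def m (b n : ℕ) : ℕ := ((Finset.range n).filter (fun k => Odd (T^[k] b))).card

/-!
Write `A n b = 2^n T^n(b) - 3^m(b,n) b`. One Collatz step gives
`A (n+1) b = 3^p A n b + 2^n p`, where `p` is the parity of `T^n(b)`. Replacing `b` by `b + 2^n`
adds `3^m(b,n)` to `T^n(b)` and keeps the first `n` parities, so `A n` does not change while `p`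
flips. The pair `b, b + 2^n` therefore contributes `4 A n b + 2^n` to the sum at level `n + 1`,
and `S(n+1) = 4 S(n) + 4^n` gives `4 S(n) = n 4^n`.
-/

theorem two_mul_T (x : ℕ) : 2 * T x = 3 ^ (x % 2) * x + x % 2 := by
  unfold T
  rcases Nat.mod_two_eq_zero_or_one x with h | h <;> simp [h] <;> omega

theorem T_add_two_mul (x c : ℕ) : T (x + 2 * c) = T x + 3 ^ (x % 2) * c := by
  have hx := two_mul_T x
  have hxc := two_mul_T (x + 2 * c)
  rw [Nat.add_mul_mod_self_left] at hxc
  apply Nat.eq_of_mul_eq_mul_left two_pos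
  rw [hxc, mul_add (2 : ℕ), hx]
  ring

theorem m_succ (b n : ℕ) : m b (n + 1) = m b n + T^[n] b % 2 := by
  rw [m, m, Finset.range_add_one, Finset.filter_insert]
  split_ifs with h
  · rw [Finset.card_insert_of_notMem (by simp), Nat.odd_iff.mp h]
  · rw [Nat.not_odd_iff.mp h, add_zero]

theorem iterate_T_add_two_pow {n k : ℕ} (hk : k ≤ n) (b : ℕ) :
    T^[k] (b + 2 ^ n) = T^[k] b + 2 ^ (n - k) * 3 ^ m b k := by
  induction k with
  | zero => simp [m]
  | succ k ih =>
    have h2 : 2 ^ (n - k) = 2 * 2 ^ (n - (k + 1)) := by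
      rw [← pow_succ']; congr 1; omega
    rw [Function.iterate_succ_apply', Function.iterate_succ_apply', ih (by omega), h2, mul_assoc,
      T_add_two_mul, m_succ, pow_add]
    ring

theorem m_add_two_pow (n b : ℕ) : m (b + 2 ^ n) n = m b n := by
  refine congrArg Finset.card (Finset.filter_congr fun k hk => ?_)
  have hk : k < n := Finset.mem_range.mp hk
  have heven : Even (2 ^ (n - k) * 3 ^ m b k) :=
    (Nat.even_pow.mpr ⟨even_two, by omega⟩).mul_right _
  rw [iterate_T_add_two_pow hk.le, Nat.odd_add]
  simp [heven]

/-- `2^n B(n,b)` in the notation of the paper. -/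
def adjustment (n b : ℕ) : ℤ := 2 ^ n * T^[n] b - 3 ^ m b n * b

theorem adjustment_succ (n b : ℕ) :
    adjustment (n + 1) b = 3 ^ (T^[n] b % 2) * adjustment n b + 2 ^ n * (T^[n] b % 2 : ℕ) := by
  have h := congrArg (Nat.cast : ℕ → ℤ) (two_mul_T (T^[n] b))
  push_cast at h
  rw [adjustment, adjustment, Function.iterate_succ_apply', m_succ, pow_succ, pow_add]
  push_cast
  linear_combination (2 : ℤ) ^ n * h

theorem adjustment_add_two_pow (n b : ℕ) : adjustment n (b + 2 ^ n) = adjustment n b := by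
  rw [adjustment, adjustment, iterate_T_add_two_pow le_rfl, m_add_two_pow, Nat.sub_self]
  push_cast
  ring

theorem adjustment_succ_add_adjustment_succ_add_two_pow (n b : ℕ) :
    adjustment (n + 1) b + adjustment (n + 1) (b + 2 ^ n) = 4 * adjustment n b + 2 ^ n := by
  have hflip : T^[n] (b + 2 ^ n) % 2 = 1 - T^[n] b % 2 := by
    have h3 : 3 ^ m b n % 2 = 1 := Nat.odd_iff.mp (Odd.pow (by decide))
    rw [iterate_T_add_two_pow le_rfl, Nat.sub_self, pow_zero, one_mul]
    omega
  rw [adjustment_succ, adjustment_succ, adjustment_add_two_pow, hflip]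
  rcases Nat.mod_two_eq_zero_or_one (T^[n] b) with h | h <;> rw [h] <;> push_cast <;> ring

theorem four_mul_sum_adjustment (n : ℕ) :
    4 * ∑ b ∈ Finset.range (2 ^ n), adjustment n b = n * 4 ^ n := by
  induction n with
  | zero => simp [adjustment, m]
  | succ n ih =>
    rw [pow_succ', two_mul, Finset.sum_range_add, ← Finset.sum_add_distrib]
    simp_rw [add_comm (2 ^ n), adjustment_succ_add_adjustment_succ_add_two_pow,
      Finset.sum_add_distrib, ← Finset.mul_sum]
    simp only [Finset.sum_const, Finset.card_range, nsmul_eq_mul]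
    have h4 : (2 : ℤ) ^ n * 2 ^ n = 4 ^ n := by rw [← mul_pow]; norm_num
    push_cast
    linear_combination 4 * ih + 4 * h4

theorem stmt8 : ∀ n ≥ 2,
    ∑ b ∈ Finset.range (2 ^ n), ((2 ^ n * T^[n] b : ℤ) - 3 ^ m b n * b) = n * 2 ^ (2 * n - 2) := by
  intro n hn
  have h4 : (4 : ℤ) ^ n = 4 * 2 ^ (2 * n - 2) := by
    rw [show (4 : ℤ) = 2 ^ 2 by norm_num, ← pow_mul, ← pow_add]
    congr 1; omega
  have h := four_mul_sum_adjustment n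
  rw [h4, mul_left_comm] at h
  exact mul_left_cancel₀ four_ne_zero h
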